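/- Let p be a prime, n ≥ 1, and let r(p,n) be the number of orbits of SL(2, ZMod p) acting by left multiplication on 2×n matrices over ZMod p. Then r(p, n+1) − r(p, n) = p^(n-1)(p^n + p − 1). -/

import Mathlib

/-- The orbit of a `2 × n` matrix over `ZMod p` under left multiplication by `SL(2, ZMod p)`. -/
def slOrbit (p n : ℕ) (M : Matrix (Fin 2) (Fin n) (ZMod p)) :
    Set (Matrix (Fin 2) (Fin n) (ZMod p)) :=
  { N | ∃ S : Matrix.SpecialLinearGroup (Fin 2) (ZMod p),
      (S : Matrix (Fin 2) (Fin 2) (ZMod p)) * M = N }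

/-- The number of orbits of `SL(2, ZMod p)` on `2 × n` matrices over `ZMod p`. -/
noncomputable def r (p n : ℕ) : ℕ :=
  Nat.card { O : Set (Matrix (Fin 2) (Fin n) (ZMod p)) // ∃ M, O = slOrbit p n M }

/-!
Split a `2 × (n + 1)` matrix into its first column and the remaining `2 × n` block. The group
`SL(2, 𝔽_p)` has two orbits on columns, `{0}` and the nonzero vectors, so the orbits on pairs
(column, block) lying over a column `v` correspond to the orbits of the stabilizer of `v` on
blocks. Over `v = 0` these are the `r p n` orbits of `SL(2, 𝔽_p)` itself; over `v = e₀` the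
stabilizer is the group of transvections `[[1, b], [0, 1]]`, of order `p`. A nontrivial
transvection fixes exactly the `p ^ n` blocks with zero second row, so by Burnside it has
`(p ^ (2n) + (p - 1) p ^ n) / p = p ^ (n - 1) (p ^ n + p - 1)` orbits.
-/

open Matrix MatrixGroups MulAction

namespace MulAction

variable {G α β : Type*} [Group G] [MulAction G α] [MulAction G β]

theorem card_orbitSets_eq_card_orbitRel_quotient :
    Nat.card {O : Set α // ∃ a, O = orbit G a} = Nat.card (orbitRel.Quotient G α) := by
  refine (Nat.card_congr <| (Equiv.ofInjective _ orbitRel.Quotient.orbit_injective).trans <|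
    Equiv.subtypeEquivRight fun O => ?_).symm
  constructor
  · rintro ⟨x, rfl⟩
    induction x using Quotient.inductionOn' with | h a => exact ⟨a, rfl⟩
  · rintro ⟨a, rfl⟩
    exact ⟨Quotient.mk'' a, rfl⟩

def orbitRel.Quotient.congr {γ : Type*} [MulAction G γ] (e : α ≃ γ)
    (he : ∀ (g : G) a, e (g • a) = g • e a) :
    orbitRel.Quotient G α ≃ orbitRel.Quotient G γ :=
  _root_.Quotient.congr e fun a b => by
    simp only [orbitRel_apply, mem_orbit_iff, ← he, e.apply_eq_iff_eq]

def orbitRel.Quotient.topEquiv : orbitRel.Quotient (⊤ : Subgroup G) α ≃ orbitRel.Quotient G α :=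
  _root_.Quotient.congr (Equiv.refl α) fun a b => by
    simp only [Equiv.refl_apply, orbitRel_apply, mem_orbit_iff, Subtype.exists, Subgroup.mem_top,
      exists_true_left]
    rfl

def stabilizerOrbitsToProd (a : α) :
    orbitRel.Quotient (stabilizer G a) β → orbitRel.Quotient G (α × β) :=
  Quotient.map' (fun b => (a, b)) fun _ _ ⟨g, hg⟩ =>
    ⟨g, Prod.ext (g.2 : (g : G) • a = a) hg⟩

theorem stabilizerOrbitsToProd_injective (a : α) :
    Function.Injective (stabilizerOrbitsToProd (G := G) (β := β) a) := by
  rintro ⟨b⟩ ⟨b'⟩ h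
  obtain ⟨g, hg⟩ := Quotient.exact h
  exact Quotient.sound ⟨⟨g, congrArg Prod.fst hg⟩, congrArg Prod.snd hg⟩

theorem mk_mem_range_stabilizerOrbitsToProd {a a' : α} (h : a' ∈ orbit G a) (b : β) :
    (Quotient.mk'' (a', b) : orbitRel.Quotient G (α × β)) ∈
      Set.range (stabilizerOrbitsToProd (β := β) a) := by
  obtain ⟨g, rfl⟩ := h
  exact ⟨Quotient.mk'' (g⁻¹ • b), Quotient.sound ⟨g⁻¹, by simp⟩⟩

theorem stabilizerOrbitsToProd_ne {a a' : α} (h : a' ∉ orbit G a)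
    (x : orbitRel.Quotient (stabilizer G a) β) (y : orbitRel.Quotient (stabilizer G a') β) :
    stabilizerOrbitsToProd a x ≠ stabilizerOrbitsToProd a' y := by
  induction x using Quotient.inductionOn' with | h b => ?_
  induction y using Quotient.inductionOn' with | h b' => ?_
  intro hxy
  obtain ⟨g, hg⟩ := Quotient.exact hxy.symm
  exact h ⟨g, congrArg Prod.fst hg⟩

theorem card_orbitRel_quotient_prod_of_two_orbits [Finite β] {a a' : α} (ha' : a' ∉ orbit G a)
    (hα : ∀ x, x ∈ orbit G a ∨ x ∈ orbit G a') :
    Nat.card (orbitRel.Quotient G (α × β)) =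
      Nat.card (orbitRel.Quotient (stabilizer G a) β) +
        Nat.card (orbitRel.Quotient (stabilizer G a') β) := by
  rw [← Nat.card_sum]
  refine (Nat.card_congr (Equiv.ofBijective
    (Sum.elim (stabilizerOrbitsToProd a) (stabilizerOrbitsToProd a')) ⟨?_, ?_⟩)).symm
  · exact (stabilizerOrbitsToProd_injective a).sumElim (stabilizerOrbitsToProd_injective a')
      (stabilizerOrbitsToProd_ne ha')
  · rintro ⟨x, b⟩
    rcases hα x with hx | hx
    · obtain ⟨y, hy⟩ := mk_mem_range_stabilizerOrbitsToProd hx b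
      exact ⟨Sum.inl y, hy⟩
    · obtain ⟨y, hy⟩ := mk_mem_range_stabilizerOrbitsToProd hx b
      exact ⟨Sum.inr y, hy⟩

end MulAction

namespace Matrix

def rowOneEqZeroEquiv {n : ℕ} {R : Type*} [Zero R] :
    {B : Matrix (Fin 2) (Fin n) R // B 1 = 0} ≃ (Fin n → R) where
  toFun B := B.1 0
  invFun u := ⟨Matrix.of ![u, 0], rfl⟩
  left_inv B := by
    ext i k
    fin_cases i
    · rfl
    · exact (congrFun B.2 k).symm
  right_inv _ := rfl

def firstColEquiv {m R : Type*} {n : ℕ} :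
    Matrix m (Fin (n + 1)) R ≃ (m → R) × Matrix m (Fin n) R where
  toFun M := (fun i => M i 0, Matrix.of fun i k => M i k.succ)
  invFun x := Matrix.of fun i => Fin.cons (x.1 i) (x.2 i)
  left_inv M := by
    ext i j
    refine Fin.cases rfl (fun _ => rfl) j
  right_inv _ := rfl

namespace SpecialLinearGroup

section CommRing

variable {m k R : Type*} [Fintype m] [DecidableEq m] [CommRing R]

instance : MulAction (SpecialLinearGroup m R) (Matrix m k R) where
  smul S M := (S : Matrix m m R) * M
  one_smul M := Matrix.one_mul M
  mul_smul S T M := Matrix.mul_assoc (S : Matrix m m R) T M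

theorem smul_matrix_def (S : SpecialLinearGroup m R) (M : Matrix m k R) :
    S • M = (S : Matrix m m R) * M := rfl

theorem firstColEquiv_smul {n : ℕ} (S : SpecialLinearGroup m R) (M : Matrix m (Fin (n + 1)) R) :
    firstColEquiv (S • M) = S • firstColEquiv M :=
  rfl

theorem stabilizer_zero_eq_top : stabilizer (SpecialLinearGroup m R) (0 : m → R) = ⊤ :=
  Subgroup.eq_top_iff' _ |>.2 fun g => mem_stabilizer_iff.2 (smul_zero g)

theorem single_zero_notMem_orbit_zero [Nontrivial R] :
    (Pi.single 0 1 : Fin 2 → R) ∉ orbit SL(2, R) 0 := by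
  rintro ⟨g, hg⟩
  simpa [smul_zero] using congrFun hg 0

theorem eq_transvection_of_smul_single_zero {S : SL(2, R)}
    (hS : S • (Pi.single 0 1 : Fin 2 → R) = Pi.single 0 1) :
    S = transvection zero_ne_one ((S : Matrix (Fin 2) (Fin 2) R) 0 1) := by
  have h00 : (S : Matrix (Fin 2) (Fin 2) R) 0 0 = 1 := by
    simpa [Matrix.SpecialLinearGroup.smul_def] using congrFun hS 0
  have h10 : (S : Matrix (Fin 2) (Fin 2) R) 1 0 = 0 := by
    simpa [Matrix.SpecialLinearGroup.smul_def] using congrFun hS 1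
  have h11 : (S : Matrix (Fin 2) (Fin 2) R) 1 1 = 1 := by
    have hdet := S.2
    rwa [det_fin_two, h00, h10, one_mul, mul_zero, sub_zero] at hdet
  ext i j
  fin_cases i <;> fin_cases j <;> simp [transvection_coe, h00, h10, h11]

def transvectionEquivStabilizer :
    R ≃ stabilizer SL(2, R) (Pi.single 0 1 : Fin 2 → R) where
  toFun b := ⟨transvection zero_ne_one b, transvection_smul_single_fst _ b⟩
  invFun S := (S : Matrix (Fin 2) (Fin 2) R) 0 1
  left_inv b := by simp [transvection_coe]
  right_inv S := Subtype.ext (eq_transvection_of_smul_single_zero S.2).symm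

theorem transvection_smul_eq_self_iff [NoZeroDivisors R] {n : ℕ} {b : R} (hb : b ≠ 0)
    (B : Matrix (Fin 2) (Fin n) R) :
    transvection (zero_ne_one : (0 : Fin 2) ≠ 1) b • B = B ↔ B 1 = 0 := by
  have row0 k : (transvection (zero_ne_one : (0 : Fin 2) ≠ 1) b • B) 0 k = B 0 k + b * B 1 k :=
    Matrix.transvection_mul_apply_same 0 1 k b B
  have row1 k : (transvection (zero_ne_one : (0 : Fin 2) ≠ 1) b • B) 1 k = B 1 k :=
    Matrix.transvection_mul_apply_of_ne 0 1 1 k one_ne_zero b B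
  constructor
  · intro h
    funext k
    have hk := row0 k
    rw [h, left_eq_add, mul_eq_zero] at hk
    exact hk.resolve_left hb
  · intro h
    ext i k
    fin_cases i
    · simp [row0, h]
    · exact row1 k

end CommRing

variable {F : Type*} [Field F]

theorem mem_orbit_zero_or_mem_orbit_single_zero (v : Fin 2 → F) :
    v ∈ orbit SL(2, F) 0 ∨ v ∈ orbit SL(2, F) (Pi.single 0 1 : Fin 2 → F) := by
  by_cases hv : v = 0
  · exact .inl (hv ▸ mem_orbit_self _)
  right
  by_cases h0 : v 0 = 0
  · have h1 : v 1 ≠ 0 := fun h1 => hv (funext fun i => by fin_cases i <;> assumption)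
    refine ⟨(⟨!![0, -(v 1)⁻¹; v 1, 0], by simp [det_fin_two_of, h1]⟩ : SL(2, F)), ?_⟩
    show !![0, -(v 1)⁻¹; v 1, 0] *ᵥ Pi.single 0 1 = v
    ext i; fin_cases i <;> simp [h0]
  · refine ⟨(⟨!![v 0, 0; v 1, (v 0)⁻¹], by simp [det_fin_two_of, h0]⟩ : SL(2, F)), ?_⟩
    show !![v 0, 0; v 1, (v 0)⁻¹] *ᵥ Pi.single 0 1 = v
    ext i; fin_cases i <;> simp

variable [Fintype F] {n : ℕ}

theorem card_fixedBy_transvectionEquivStabilizer {b : F} (hb : b ≠ 0) :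
    Nat.card (fixedBy (Matrix (Fin 2) (Fin n) F) (transvectionEquivStabilizer b)) =
      Fintype.card F ^ n := by
  have fixed_equiv : fixedBy (Matrix (Fin 2) (Fin n) F) (transvectionEquivStabilizer b) ≃
      (Fin n → F) :=
    (Equiv.subtypeEquivRight fun B => transvection_smul_eq_self_iff hb B).trans rowOneEqZeroEquiv
  rw [Nat.card_congr fixed_equiv, Nat.card_fun, Nat.card_eq_fintype_card, Nat.card_eq_fintype_card,
    Fintype.card_fin]

theorem card_orbits_stabilizer_single_zero_mul :
    Nat.card (orbitRel.Quotient (stabilizer SL(2, F) (Pi.single 0 1 : Fin 2 → F))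
      (Matrix (Fin 2) (Fin n) F)) * Fintype.card F =
      Fintype.card F ^ n * (Fintype.card F ^ n + Fintype.card F - 1) := by
  classical
  set q := Fintype.card F
  set X := Matrix (Fin 2) (Fin n) F
  set e := transvectionEquivStabilizer (R := F)
  have burnside := sum_card_fixedBy_eq_card_orbits_mul_card_group
    (stabilizer SL(2, F) (Pi.single 0 1 : Fin 2 → F)) X
  have card_stabilizer : Nat.card (stabilizer SL(2, F) (Pi.single 0 1 : Fin 2 → F)) = q :=
    (Nat.card_congr e.symm).trans Nat.card_eq_fintype_card
  have e_zero : e 0 = 1 := Subtype.ext (transvection_coeff_zero zero_ne_one)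
  calc _ = ∑ u, Nat.card (fixedBy X u) := by
        rw [← card_stabilizer]
        simp only [Nat.card_eq_fintype_card]
        convert burnside.symm
    _ = ∑ b, Nat.card (fixedBy X (e b)) := (e.sum_comp _).symm
    _ = Nat.card (fixedBy X (e 0)) + ∑ b ∈ {0}ᶜ, Nat.card (fixedBy X (e b)) :=
        Fintype.sum_eq_add_sum_compl 0 _
    _ = q ^ n * q ^ n + (q - 1) * q ^ n := by
        rw [e_zero, fixedBy_one_eq_univ, Nat.card_univ, Finset.sum_congr rfl fun b hb =>
          card_fixedBy_transvectionEquivStabilizer (by simpa using hb), Finset.sum_const,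
          Finset.card_compl, Finset.card_singleton, smul_eq_mul]
        simp [X, Matrix, q, pow_two]
    _ = q ^ n * (q ^ n + q - 1) := by
        rw [Nat.add_sub_assoc Fintype.card_pos, mul_add, mul_comm (q - 1)]

theorem card_orbits_stabilizer_single_zero (hn : n ≠ 0) :
    Nat.card (orbitRel.Quotient (stabilizer SL(2, F) (Pi.single 0 1 : Fin 2 → F))
      (Matrix (Fin 2) (Fin n) F)) =
      Fintype.card F ^ (n - 1) * (Fintype.card F ^ n + Fintype.card F - 1) := by
  apply Nat.eq_of_mul_eq_mul_right (Fintype.card_pos (α := F))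
  rw [card_orbits_stabilizer_single_zero_mul, ← pow_sub_one_mul hn]
  ring

end SpecialLinearGroup

end Matrix

theorem r_eq_card_orbitRel_quotient (p n : ℕ) :
    r p n = Nat.card (orbitRel.Quotient SL(2, ZMod p) (Matrix (Fin 2) (Fin n) (ZMod p))) :=
  card_orbitSets_eq_card_orbitRel_quotient

theorem orbit_count_difference (p n : ℕ) (hp : p.Prime) (hn : 1 ≤ n) :
    r p (n + 1) - r p n = p ^ (n - 1) * (p ^ n + p - 1) := by
  have : Fact p.Prime := ⟨hp⟩
  have r_succ : r p (n + 1) = r p n + p ^ (n - 1) * (p ^ n + p - 1) := by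
    rw [r_eq_card_orbitRel_quotient, r_eq_card_orbitRel_quotient,
      Nat.card_congr (orbitRel.Quotient.congr firstColEquiv SpecialLinearGroup.firstColEquiv_smul),
      card_orbitRel_quotient_prod_of_two_orbits SpecialLinearGroup.single_zero_notMem_orbit_zero
        SpecialLinearGroup.mem_orbit_zero_or_mem_orbit_single_zero,
      SpecialLinearGroup.stabilizer_zero_eq_top, Nat.card_congr orbitRel.Quotient.topEquiv,
      SpecialLinearGroup.card_orbits_stabilizer_single_zero (by omega), ZMod.card]
  omega
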